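/- Every local strong USP is a strong USP. -/
import Mathlib


/-- Exactly two of three propositions hold. -/
def ExactlyTwo (P Q R : Prop) : Prop :=
  (P ∧ Q ∧ ¬R) ∨ (P ∧ ¬Q ∧ R) ∨ (¬P ∧ Q ∧ R)

/-- A strong USP (symbols `1,2,3` represented by `0,1,2 : Fin 3`). -/
def IsStrongUSP {k : ℕ} (U : Set (Fin k → Fin 3)) : Prop :=
  ∀ π₁ π₂ π₃ : Equiv.Perm U, (π₁ = π₂ ∧ π₂ = π₃) ∨
    ∃ u : U, ∃ i : Fin k,
      ExactlyTwo (((π₁ u : U) : Fin k → Fin 3) i = 0)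
        (((π₂ u : U) : Fin k → Fin 3) i = 1)
        (((π₃ u : U) : Fin k → Fin 3) i = 2)

/-- The allowed triples of symbols for a local strong USP; with symbols `1,2,3`
represented by `0,1,2`, these are `(1,2,1),(1,2,2),(1,1,3),(1,3,3),(2,2,3),(3,2,3)`. -/
def allowedTriples : Set (Fin 3 × Fin 3 × Fin 3) :=
  {(0,1,0), (0,1,1), (0,0,2), (0,2,2), (1,1,2), (2,1,2)}

/-- A local strong USP of width `k`. -/
def IsLocalStrongUSP {k : ℕ} (U : Set (Fin k → Fin 3)) : Prop :=
  ∀ u ∈ U, ∀ v ∈ U, ∀ w ∈ U, ¬(u = v ∧ v = w) →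
    ∃ i : Fin k, (u i, v i, w i) ∈ allowedTriples

theorem stmt_17 {k : ℕ} (U : Set (Fin k → Fin 3)) (h : IsLocalStrongUSP U) :
    IsStrongUSP U := by
  intro π₁ π₂ π₃
  by_cases hc : π₁ = π₂ ∧ π₂ = π₃
  · exact Or.inl hc
  right
  have hx : ∃ x : U, π₁ x ≠ π₂ x ∨ π₂ x ≠ π₃ x := by
    by_contra hall
    push_neg at hall
    exact hc ⟨Equiv.ext fun x => (hall x).1, Equiv.ext fun x => (hall x).2⟩
  obtain ⟨x, hx⟩ := hx
  have hne : ¬((π₁ x : Fin k → Fin 3) = (π₂ x : Fin k → Fin 3) ∧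
      (π₂ x : Fin k → Fin 3) = (π₃ x : Fin k → Fin 3)) := by
    rintro ⟨h1, h2⟩
    rcases hx with hx | hx
    · exact hx (Subtype.ext h1)
    · exact hx (Subtype.ext h2)
  obtain ⟨i, hi⟩ := h _ (π₁ x).2 _ (π₂ x).2 _ (π₃ x).2 hne
  refine ⟨x, i, ?_⟩
  simp only [allowedTriples, Set.mem_insert_iff, Set.mem_singleton_iff, Prod.mk.injEq] at hi
  unfold ExactlyTwo
  rcases hi with ⟨h1,h2,h3⟩|⟨h1,h2,h3⟩|⟨h1,h2,h3⟩|⟨h1,h2,h3⟩|⟨h1,h2,h3⟩|⟨h1,h2,h3⟩ <;>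
    simp [h1, h2, h3]
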